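/- The SWMR property is not inductive for a model including transient upgrade states: there exists a state Σ satisfying SWMR and a transition Σ → Σ' (completing a pending GO-M grant) such that Σ' violates SWMR. -/
import Mathlib


/-- Cache states extended with the transient state IMA
(invalid, upgrading to modified, awaiting acknowledgement). -/
inductive ECacheState : Type
  | M | S | I | IMA
  deriving DecidableEq

open ECacheState

/-- A system state: two device states and the list of pending
host-to-device responses for device 1 (each GO carries a target state). -/
structure SysState where
  c1 : ECacheState
  c2 : ECacheState
  rsp1 : List ECacheState

def SWMR (σ : SysState) : Prop :=
  ¬(σ.c1 = M ∧ (σ.c2 = M ∨ σ.c2 = S)) ∧ ¬(σ.c2 = M ∧ (σ.c1 = M ∨ σ.c1 = S))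

/-- CompleteGO: device 1 is in IMA and the head of its response channel is GO(M);
device 1 becomes M and the message is removed. -/
def CompleteGO (σ σ' : SysState) : Prop :=
  σ.c1 = IMA ∧ σ.rsp1.head? = some M ∧
  σ'.c1 = M ∧ σ'.c2 = σ.c2 ∧ σ'.rsp1 = σ.rsp1.tail

/-- SWMR is not inductive: some SWMR state steps (via CompleteGO) to a non-SWMR state. -/
theorem swmr_not_inductive :
    ∃ σ σ' : SysState, SWMR σ ∧ CompleteGO σ σ' ∧ ¬ SWMR σ' := by
  exact ⟨⟨IMA, M, [M]⟩, ⟨M, M, []⟩, ⟨by simp, by simp⟩, ⟨rfl, rfl, rfl, rfl, rfl⟩, by simp [SWMR]⟩
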